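/- arXiv:1702.05423 — 2 statements merged into one kernel-verified Lean document; each statement's English description precedes it below -/
import Mathlib

section
/- Let B ∈ ℝ^{p×q}, h : ℝ^q → ℝ differentiable with ∇h L_h-Lipschitz, Q := η_y I − β BᵀB with η_y, β > 0, ρ > 0, θ ∈ (0,1], δ > 0. Let y*, λ* satisfy ∇h(y*) = Bᵀλ*. Fix x^{k+1} (so that r^{k+1/2} := A x^{k+1} + B y^k − b is fixed), y^k, λ^k, and let ỹ^{k+1} satisfy ∇h(ỹ^{k+1}) − Bᵀλ^k + β Bᵀ r^{k+1/2} + η_y(ỹ^{k+1} − y^k) = 0. Consider the two outcomes y^{k+1} ∈ {ỹ^{k+1}, y^k} with respective weights θ and 1−θ, with r^{k+1} := r^{k+1/2} + B(y^{k+1} − y^k) and λ^{k+1} := λ^k − ρ r^{k+1}; write E[q(y^{k+1})] := θ q(ỹ^{k+1}) + (1−θ) q(y^k). Then E[‖Bᵀ(λ^{k+1} − λ*)‖²] − (1−θ)(1+δ)‖Bᵀ(λ^k − λ*)‖² ≤ 4 E[ L_h²‖y^{k+1} − y*‖² + ‖Q(y^{k+1} − y^k)‖² ] + 2(β − ρ)²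 E[‖Bᵀ r^{k+1}‖²] + 2ρ²(1−θ)(1 + 1/δ) E[ ‖Bᵀ r^{k+1}‖² + ‖BᵀB(y^{k+1} − y^k)‖² ]. -/
/-!
Write `T = Bᵀ`. On the outcome `y = ỹ`, the optimality condition for `ỹ` together with
`∇h(y*) = Tλ*` turns the dual error into a sum of three terms,
`T(λ⁺ - λ*) = (∇h ỹ - ∇h y*) + Q(ỹ - yᵏ) + (β - ρ) T r⁺`,
which is bounded by `‖a + b + c‖² ≤ 4‖a‖² + 4‖b‖² + 2‖c‖²` and the Lipschitz bound on `∇h`.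
On the outcome `y = yᵏ` nothing moves but the multiplier, `T(λ⁺ - λ*) = T(λᵏ - λ*) - ρ T r^{k+1/2}`,
and Young's inequality with parameter `δ` applies. The resulting remainder `ρ²‖T r^{k+1/2}‖²`
is charged to both outcomes, on the `ỹ` branch through `T r^{k+1/2} = T r⁺ - T B (ỹ - yᵏ)`
at the cost of a factor `2`.
-/

theorem sq_add_le_of_pos {a c δ : ℝ} (hδ : 0 < δ) :
    (a + c) ^ 2 ≤ (1 + δ) * a ^ 2 + (1 + 1 / δ) * c ^ 2 := by
  have gap : (1 + δ) * a ^ 2 + (1 + 1 / δ) * c ^ 2 - (a + c) ^ 2 = (δ * a - c) ^ 2 / δ := by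
    field_simp
    ring
  have : 0 ≤ (δ * a - c) ^ 2 / δ := by positivity
  linarith

section NormSq

variable {E : Type*} [SeminormedAddCommGroup E]

theorem norm_add_sq_le_two_mul (a b : E) : ‖a + b‖ ^ 2 ≤ 2 * (‖a‖ ^ 2 + ‖b‖ ^ 2) :=
  (pow_le_pow_left₀ (norm_nonneg _) (norm_add_le a b) 2).trans add_sq_le

theorem norm_sub_sq_le_two_mul (a b : E) : ‖a - b‖ ^ 2 ≤ 2 * (‖a‖ ^ 2 + ‖b‖ ^ 2) := by
  simpa only [sub_eq_add_neg, norm_neg] using norm_add_sq_le_two_mul a (-b)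

theorem norm_add_add_sq_le (a b c : E) :
    ‖a + b + c‖ ^ 2 ≤ 4 * ‖a‖ ^ 2 + 4 * ‖b‖ ^ 2 + 2 * ‖c‖ ^ 2 := by
  have := norm_add_sq_le_two_mul (a + b) c
  have := norm_add_sq_le_two_mul a b
  linarith

theorem norm_add_sq_le_of_pos {δ : ℝ} (hδ : 0 < δ) (a c : E) :
    ‖a + c‖ ^ 2 ≤ (1 + δ) * ‖a‖ ^ 2 + (1 + 1 / δ) * ‖c‖ ^ 2 :=
  (pow_le_pow_left₀ (norm_nonneg _) (norm_add_le a c) 2).trans (sq_add_le_of_pos hδ)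

theorem norm_smul_sq [NormedSpace ℝ E] (r : ℝ) (a : E) : ‖r • a‖ ^ 2 = r ^ 2 * ‖a‖ ^ 2 := by
  rw [norm_smul, Real.norm_eq_abs, mul_pow, sq_abs]

end NormSq

section LinearizedStep

open ContinuousLinearMap

variable {E F : Type*} [NormedAddCommGroup E] [InnerProductSpace ℝ E] [CompleteSpace E]
  [NormedAddCommGroup F] [InnerProductSpace ℝ F] [CompleteSpace F]
  (B : E →L[ℝ] F) (G : E → E) (ηy β ρ : ℝ) (ystar yk ytilde : E) (lamstar lamk r : F)

theorem adjoint_dual_error_eq_of_optimality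
    (hstar : G ystar = adjoint B lamstar)
    (hopt : G ytilde - adjoint B lamk + β • adjoint B r + ηy • (ytilde - yk) = 0) :
    adjoint B (lamk - ρ • (r + B (ytilde - yk)) - lamstar)
      = (G ytilde - G ystar) + (ηy • (ytilde - yk) - β • adjoint B (B (ytilde - yk)))
        + (β - ρ) • adjoint B (r + B (ytilde - yk)) := by
  have hG : G ytilde = adjoint B lamk - β • adjoint B r - ηy • (ytilde - yk) := by
    rw [← sub_eq_zero, ← hopt]
    module
  rw [hG, hstar]
  simp only [map_sub, map_add, map_smul]
  module

theorem norm_adjoint_dual_error_sq_le_of_optimality {Lh : ℝ}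
    (hlip : ‖G ytilde - G ystar‖ ≤ Lh * ‖ytilde - ystar‖)
    (hstar : G ystar = adjoint B lamstar)
    (hopt : G ytilde - adjoint B lamk + β • adjoint B r + ηy • (ytilde - yk) = 0) :
    ‖adjoint B (lamk - ρ • (r + B (ytilde - yk)) - lamstar)‖ ^ 2
      ≤ 4 * (Lh ^ 2 * ‖ytilde - ystar‖ ^ 2
          + ‖ηy • (ytilde - yk) - β • adjoint B (B (ytilde - yk))‖ ^ 2)
        + 2 * (β - ρ) ^ 2 * ‖adjoint B (r + B (ytilde - yk))‖ ^ 2 := by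
  have hlip_sq : ‖G ytilde - G ystar‖ ^ 2 ≤ Lh ^ 2 * ‖ytilde - ystar‖ ^ 2 := by
    rw [← mul_pow]
    exact pow_le_pow_left₀ (norm_nonneg _) hlip 2
  have := norm_add_add_sq_le (G ytilde - G ystar)
    (ηy • (ytilde - yk) - β • adjoint B (B (ytilde - yk)))
    ((β - ρ) • adjoint B (r + B (ytilde - yk)))
  rw [norm_smul_sq, ← adjoint_dual_error_eq_of_optimality B G ηy β ρ ystar yk ytilde lamstar
    lamk r hstar hopt] at this
  linarith

theorem norm_adjoint_dual_error_sq_le_of_pos {δ : ℝ} (hδ : 0 < δ) :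
    ‖adjoint B (lamk - ρ • r - lamstar)‖ ^ 2
      ≤ (1 + δ) * ‖adjoint B (lamk - lamstar)‖ ^ 2
        + (1 + 1 / δ) * (ρ ^ 2 * ‖adjoint B r‖ ^ 2) := by
  have split : adjoint B (lamk - ρ • r - lamstar)
      = adjoint B (lamk - lamstar) + (-ρ) • adjoint B r := by
    simp only [map_sub, map_smul]
    module
  rw [split, ← neg_sq ρ, ← norm_smul_sq]
  exact norm_add_sq_le_of_pos hδ _ _

theorem norm_adjoint_sq_le_two_mul (e : E) :
    ‖adjoint B r‖ ^ 2 ≤ 2 * (‖adjoint B (r + B e)‖ ^ 2 + ‖adjoint B (B e)‖ ^ 2) := by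
  simpa only [map_add, add_sub_cancel_right] using
    norm_sub_sq_le_two_mul (adjoint B (r + B e)) (adjoint B (B e))

end LinearizedStep

theorem stmt_15_general
    {p q : ℕ}
    (B : EuclideanSpace ℝ (Fin q) →L[ℝ] EuclideanSpace ℝ (Fin p))
    (Gh : EuclideanSpace ℝ (Fin q) → EuclideanSpace ℝ (Fin q))
    (Lh : ℝ)
    (hhlip : ∀ u v, ‖Gh u - Gh v‖ ≤ Lh * ‖u - v‖)
    (ηy β ρ : ℝ)
    (θ : ℝ) (hθ0 : 0 < θ) (hθ1 : θ ≤ 1)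
    (δ : ℝ) (hδ : 0 < δ)
    (Qop : EuclideanSpace ℝ (Fin q) →L[ℝ] EuclideanSpace ℝ (Fin q))
    (hQop : Qop = ηy • (1 : EuclideanSpace ℝ (Fin q) →L[ℝ] EuclideanSpace ℝ (Fin q))
      - β • ((ContinuousLinearMap.adjoint B).comp B))
    (ystar : EuclideanSpace ℝ (Fin q)) (lamstar : EuclideanSpace ℝ (Fin p))
    (hstar : Gh ystar = ContinuousLinearMap.adjoint B lamstar)
    (yk : EuclideanSpace ℝ (Fin q)) (lamk : EuclideanSpace ℝ (Fin p))
    (rhalf : EuclideanSpace ℝ (Fin p))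
    (ytilde : EuclideanSpace ℝ (Fin q))
    (hyopt : Gh ytilde - ContinuousLinearMap.adjoint B lamk
      + β • ContinuousLinearMap.adjoint B rhalf + ηy • (ytilde - yk) = 0)
    (rnew : EuclideanSpace ℝ (Fin q) → EuclideanSpace ℝ (Fin p))
    (hrnew : ∀ y', rnew y' = rhalf + B (y' - yk))
    (lamnew : EuclideanSpace ℝ (Fin q) → EuclideanSpace ℝ (Fin p))
    (hlamnew : ∀ y', lamnew y' = lamk - ρ • rnew y')
    (EX : (EuclideanSpace ℝ (Fin q) → ℝ) → ℝ)
    (hEX : ∀ Q : EuclideanSpace ℝ (Fin q) → ℝ,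
      EX Q = θ * Q ytilde + (1 - θ) * Q yk) :
    EX (fun y' => ‖ContinuousLinearMap.adjoint B (lamnew y' - lamstar)‖ ^ 2)
        - (1 - θ) * (1 + δ) * ‖ContinuousLinearMap.adjoint B (lamk - lamstar)‖ ^ 2
      ≤ 4 * EX (fun y' => Lh ^ 2 * ‖y' - ystar‖ ^ 2 + ‖Qop (y' - yk)‖ ^ 2)
        + 2 * (β - ρ) ^ 2 * EX (fun y' => ‖ContinuousLinearMap.adjoint B (rnew y')‖ ^ 2)
        + 2 * ρ ^ 2 * (1 - θ) * (1 + 1 / δ) *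
            EX (fun y' => ‖ContinuousLinearMap.adjoint B (rnew y')‖ ^ 2
              + ‖ContinuousLinearMap.adjoint B (B (y' - yk))‖ ^ 2) := by
  set T := ContinuousLinearMap.adjoint B
  have hQ : ∀ e, Qop e = ηy • e - β • T (B e) := by simp [hQop, T]
  have hrk : rnew yk = rhalf := by simp [hrnew]
  have htilde := norm_adjoint_dual_error_sq_le_of_optimality B Gh ηy β ρ ystar yk ytilde
    lamstar lamk rhalf (hhlip _ _) hstar hyopt
  rw [← hQ, ← hrnew, ← hlamnew] at htilde
  have hk := norm_adjoint_dual_error_sq_le_of_pos B ρ lamstar lamk rhalf hδ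
  rw [← hrk, ← hlamnew] at hk
  have hr := norm_adjoint_sq_le_two_mul B rhalf (ytilde - yk)
  rw [← hrnew, ← hrk] at hr
  simp only [hEX, sub_self, map_zero, norm_zero, zero_pow two_ne_zero, add_zero]
  have hθ : 0 ≤ 1 - θ := by linarith
  have hc : 0 ≤ ρ ^ 2 * (1 - θ) * (1 + 1 / δ) := by positivity
  have hrk_avg : ‖T (rnew yk)‖ ^ 2
      ≤ 2 * (θ * (‖T (rnew ytilde)‖ ^ 2 + ‖T (B (ytilde - yk))‖ ^ 2)
        + (1 - θ) * ‖T (rnew yk)‖ ^ 2) := by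
    nlinarith [sq_nonneg ‖T (rnew yk)‖]
  linarith [mul_le_mul_of_nonneg_left htilde hθ0.le, mul_le_mul_of_nonneg_left hk hθ,
    mul_le_mul_of_nonneg_left hrk_avg hc,
    mul_nonneg hθ (mul_nonneg (sq_nonneg Lh) (sq_nonneg ‖yk - ystar‖)),
    mul_nonneg (mul_nonneg (sq_nonneg (β - ρ)) hθ) (sq_nonneg ‖T (rnew yk)‖)]

/-- Lemma C.2 of the paper (bounding the dual term by the primal `y`-term). -/
theorem stmt_15
    {p q N : ℕ}
    (A : EuclideanSpace ℝ (Fin N) →L[ℝ] EuclideanSpace ℝ (Fin p))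
    (b : EuclideanSpace ℝ (Fin p))
    (B : EuclideanSpace ℝ (Fin q) →L[ℝ] EuclideanSpace ℝ (Fin p))
    (h : EuclideanSpace ℝ (Fin q) → ℝ)
    (Gh : EuclideanSpace ℝ (Fin q) → EuclideanSpace ℝ (Fin q))
    (hhgrad : ∀ z, HasGradientAt h (Gh z) z)
    (Lh : ℝ) (hLh : 0 ≤ Lh)
    (hhlip : ∀ u v, ‖Gh u - Gh v‖ ≤ Lh * ‖u - v‖)
    (ηy β ρ : ℝ) (hηy : 0 < ηy) (hβ : 0 < β) (hρ : 0 < ρ)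
    (θ : ℝ) (hθ0 : 0 < θ) (hθ1 : θ ≤ 1)
    (δ : ℝ) (hδ : 0 < δ)
    (Qop : EuclideanSpace ℝ (Fin q) →L[ℝ] EuclideanSpace ℝ (Fin q))
    (hQop : Qop = ηy • (1 : EuclideanSpace ℝ (Fin q) →L[ℝ] EuclideanSpace ℝ (Fin q))
      - β • ((ContinuousLinearMap.adjoint B).comp B))
    (ystar : EuclideanSpace ℝ (Fin q)) (lamstar : EuclideanSpace ℝ (Fin p))
    (hstar : Gh ystar = ContinuousLinearMap.adjoint B lamstar)
    (xkp : EuclideanSpace ℝ (Fin N))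
    (yk : EuclideanSpace ℝ (Fin q)) (lamk : EuclideanSpace ℝ (Fin p))
    (rhalf : EuclideanSpace ℝ (Fin p)) (hrhalf : rhalf = A xkp + B yk - b)
    (ytilde : EuclideanSpace ℝ (Fin q))
    (hyopt : Gh ytilde - ContinuousLinearMap.adjoint B lamk
      + β • ContinuousLinearMap.adjoint B rhalf + ηy • (ytilde - yk) = 0)
    (rnew : EuclideanSpace ℝ (Fin q) → EuclideanSpace ℝ (Fin p))
    (hrnew : ∀ y', rnew y' = rhalf + B (y' - yk))
    (lamnew : EuclideanSpace ℝ (Fin q) → EuclideanSpace ℝ (Fin p))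
    (hlamnew : ∀ y', lamnew y' = lamk - ρ • rnew y')
    (EX : (EuclideanSpace ℝ (Fin q) → ℝ) → ℝ)
    (hEX : ∀ Q : EuclideanSpace ℝ (Fin q) → ℝ,
      EX Q = θ * Q ytilde + (1 - θ) * Q yk) :
    EX (fun y' => ‖ContinuousLinearMap.adjoint B (lamnew y' - lamstar)‖ ^ 2)
        - (1 - θ) * (1 + δ) * ‖ContinuousLinearMap.adjoint B (lamk - lamstar)‖ ^ 2
      ≤ 4 * EX (fun y' => Lh ^ 2 * ‖y' - ystar‖ ^ 2 + ‖Qop (y' - yk)‖ ^ 2)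
        + 2 * (β - ρ) ^ 2 * EX (fun y' => ‖ContinuousLinearMap.adjoint B (rnew y')‖ ^ 2)
        + 2 * ρ ^ 2 * (1 - θ) * (1 + 1 / δ) *
            EX (fun y' => ‖ContinuousLinearMap.adjoint B (rnew y')‖ ^ 2
              + ‖ContinuousLinearMap.adjoint B (B (y' - yk))‖ ^ 2) :=
  stmt_15_general B Gh Lh hhlip ηy β ρ θ hθ0 hθ1 δ hδ Qop hQop ystar lamstar hstar yk lamk rhalf
    ytilde hyopt rnew hrnew lamnew hlamnew EX hEX
end

section
/- Let θ ∈ (0,1], and let δ, κ ≥ 0 satisfy the 2×2 matrix inequality 2·[[1 − (1−θ)(1+δ), (1−θ)(1+δ)], [(1−θ)(1+δ), κ − (1−θ)(1+δ)]] ⪰ [[θ, 1−θ], [1−θ, 1/θ − (1−θ)]]. Let B ∈ ℝ^{p×q} and σ ≥ 0 be such that BBᵀ − σI is positive semidefinite. Then for all λ⁺, λ, λ* ∈ ℝ^p: (σ/2)( ‖λ⁺ − λ*‖² − (1−θ)‖λ − λ*‖² + (1/θ)‖λ⁺ − λ‖² ) ≤ ‖Bᵀ(λ⁺ − λ*)‖²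 − (1−θ)(1+δ)‖Bᵀ(λ − λ*)‖² + κ‖Bᵀ(λ⁺ − λ)‖². -/
/-!
Write `a = λ⁺ - λ*` and `b = λ⁺ - λ`, so that `λ - λ* = a - b`. Both sides are then pairings
`m₀₀ x + 2 m₀₁ y + m₁₁ z` of a 2×2 matrix with a Gram triple `(x, y, z)`: the left side pairs
`σ/2 · P` with the Gram triple of `(a, b)`, the right side pairs `N` with that of `(Bᵀa, Bᵀb)`,
where `P`, `N` are the two matrices of the hypothesis `2N ⪰ P`. Splitting the Gram triple of
`(Bᵀa, Bᵀb)` as `σ` times that of `(a, b)` plus the Gram triple of the positive semidefinite form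
`⟪Bᵀu, Bᵀv⟫ - σ⟪u, v⟫`, the difference of the two sides is a sum of pairings of positive
semidefinite matrices (`2N - P`, `P` and `N = (2N - P + P)/2`) with Gram triples, hence
nonnegative.
-/

open RealInnerProductSpace

lemma mul_add_two_mul_add_mul_nonneg {a b c x y z : ℝ} (ha : 0 ≤ a) (hc : 0 ≤ c)
    (hb : b ^ 2 ≤ a * c) (hx : 0 ≤ x) (hz : 0 ≤ z) (hy : y ^ 2 ≤ x * z) :
    0 ≤ a * x + 2 * b * y + c * z := by
  have hsq : (2 * b * y) ^ 2 ≤ (a * x + c * z) ^ 2 := by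
    have := mul_le_mul hb hy (sq_nonneg y) (mul_nonneg ha hc)
    nlinarith [sq_nonneg (a * x - c * z)]
  linarith [(abs_le_of_sq_le_sq' hsq (by positivity)).1]

lemma Matrix.PosSemidef.mul_add_two_mul_add_mul_nonneg {M : Matrix (Fin 2) (Fin 2) ℝ}
    (hM : M.PosSemidef) {x y z : ℝ} (hx : 0 ≤ x) (hz : 0 ≤ z) (hy : y ^ 2 ≤ x * z) :
    0 ≤ M 0 0 * x + 2 * M 0 1 * y + M 1 1 * z := by
  have hsymm : M 1 0 = M 0 1 := (hM.1.apply 1 0).symm.trans (star_trivial _)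
  have hdet := hM.det_nonneg
  rw [Matrix.det_fin_two, hsymm] at hdet
  exact _root_.mul_add_two_mul_add_mul_nonneg hM.diag_nonneg hM.diag_nonneg (by linarith)
    hx hz hy

-- The matrix `!![θ, 1 - θ; 1 - θ, 1 / θ - (1 - θ)]` has determinant `θ`.
lemma theta_mul_add_two_mul_add_mul_nonneg {θ x y z : ℝ} (hθ : 0 < θ) (hx : 0 ≤ x)
    (hz : 0 ≤ z) (hy : y ^ 2 ≤ x * z) :
    0 ≤ θ * x + 2 * (1 - θ) * y + (1 / θ - (1 - θ)) * z := by
  have hθc : θ * (1 / θ - (1 - θ)) = 1 - θ + θ ^ 2 := by field_simp; ring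
  have hc : 0 ≤ 1 / θ - (1 - θ) :=
    nonneg_of_mul_nonneg_right (by nlinarith [sq_nonneg (θ - 1)]) hθ
  exact mul_add_two_mul_add_mul_nonneg hθ.le hc (by nlinarith) hx hz hy

lemma sq_inner_sub_mul_inner_le {E F : Type*} [NormedAddCommGroup E] [InnerProductSpace ℝ E]
    [NormedAddCommGroup F] [InnerProductSpace ℝ F] {𝓕 : Type*} [FunLike 𝓕 E F]
    [LinearMapClass 𝓕 ℝ E F] (T : 𝓕) {σ : ℝ}
    (hT : ∀ w, σ * ‖w‖ ^ 2 ≤ ‖T w‖ ^ 2) (a b : E) :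
    (⟪T a, T b⟫ - σ * ⟪a, b⟫) ^ 2 ≤ (‖T a‖ ^ 2 - σ * ‖a‖ ^ 2) * (‖T b‖ ^ 2 - σ * ‖b‖ ^ 2) := by
  have hquad : ∀ t : ℝ, 0 ≤ (‖T b‖ ^ 2 - σ * ‖b‖ ^ 2) * (t * t)
      + 2 * (⟪T a, T b⟫ - σ * ⟪a, b⟫) * t + (‖T a‖ ^ 2 - σ * ‖a‖ ^ 2) := by
    intro t
    have h := hT (a + t • b)
    rw [map_add, map_smul, norm_add_sq_real, norm_add_sq_real, norm_smul, norm_smul,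
      real_inner_smul_right, real_inner_smul_right, mul_pow, mul_pow, Real.norm_eq_abs,
      sq_abs] at h
    nlinarith
  have := discrim_le_zero hquad
  rw [discrim] at this
  nlinarith

lemma norm_sq_sub_mul_norm_sub_sq_add_mul {E : Type*} [NormedAddCommGroup E]
    [InnerProductSpace ℝ E] (a b : E) (c k : ℝ) :
    ‖a‖ ^ 2 - c * ‖a - b‖ ^ 2 + k * ‖b‖ ^ 2
      = (1 - c) * ‖a‖ ^ 2 + 2 * c * ⟪a, b⟫ + (k - c) * ‖b‖ ^ 2 := by
  rw [norm_sub_sq_real]; ring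

theorem stmt_16_general
    {p q : ℕ}
    (θ : ℝ) (hθ0 : 0 < θ)
    (δ κ : ℝ)
    (hmat : ((2 : ℝ) • !![1 - (1 - θ) * (1 + δ), (1 - θ) * (1 + δ);
                (1 - θ) * (1 + δ), κ - (1 - θ) * (1 + δ)]
          - !![θ, 1 - θ; 1 - θ, 1 / θ - (1 - θ)]).PosSemidef)
    (B : EuclideanSpace ℝ (Fin q) →L[ℝ] EuclideanSpace ℝ (Fin p))
    (σ : ℝ) (hσ0 : 0 ≤ σ)
    (hσ : ∀ v : EuclideanSpace ℝ (Fin p),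
      σ * ‖v‖ ^ 2 ≤ inner ℝ v ((B.comp (ContinuousLinearMap.adjoint B)) v))
    (lamp lam lamstar : EuclideanSpace ℝ (Fin p)) :
    σ / 2 * (‖lamp - lamstar‖ ^ 2 - (1 - θ) * ‖lam - lamstar‖ ^ 2
        + 1 / θ * ‖lamp - lam‖ ^ 2)
      ≤ ‖ContinuousLinearMap.adjoint B (lamp - lamstar)‖ ^ 2
        - (1 - θ) * (1 + δ) * ‖ContinuousLinearMap.adjoint B (lam - lamstar)‖ ^ 2
        + κ * ‖ContinuousLinearMap.adjoint B (lamp - lam)‖ ^ 2 := by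
  have hT (w : EuclideanSpace ℝ (Fin p)) :
      σ * ‖w‖ ^ 2 ≤ ‖ContinuousLinearMap.adjoint B w‖ ^ 2 := by
    rw [← real_inner_self_eq_norm_sq (ContinuousLinearMap.adjoint B w),
      ContinuousLinearMap.adjoint_inner_left]
    exact hσ w
  set T := ContinuousLinearMap.adjoint B
  set a := lamp - lamstar
  set b := lamp - lam
  have hab : lam - lamstar = a - b := (sub_sub_sub_cancel_left lamstar lam lamp).symm
  clear_value a b
  rw [hab, map_sub, norm_sq_sub_mul_norm_sub_sq_add_mul,
    norm_sq_sub_mul_norm_sub_sq_add_mul]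
  have hX := sub_nonneg.2 (hT a)
  have hZ := sub_nonneg.2 (hT b)
  have hY := sq_inner_sub_mul_inner_le T hT a b
  have hGram : ⟪a, b⟫ ^ 2 ≤ ‖a‖ ^ 2 * ‖b‖ ^ 2 := by
    simpa only [sq, real_inner_self_eq_norm_mul_norm] using real_inner_mul_inner_self_le a b
  have hMT := hmat.mul_add_two_mul_add_mul_nonneg hX hZ hY
  have hPT := theta_mul_add_two_mul_add_mul_nonneg hθ0 hX hZ hY
  have hM := hmat.mul_add_two_mul_add_mul_nonneg (sq_nonneg ‖a‖) (sq_nonneg ‖b‖) hGram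
  simp only [Matrix.smul_of, Matrix.smul_cons, smul_eq_mul, Matrix.smul_empty, Matrix.sub_apply,
    Matrix.of_apply, Matrix.cons_val', Matrix.cons_val_zero, Matrix.cons_val_fin_one,
    Matrix.cons_val_one] at hMT hM
  linarith [mul_nonneg hσ0 hM]

/-- Lemma C.3 of the paper. -/
theorem stmt_16
    {p q : ℕ}
    (θ : ℝ) (hθ0 : 0 < θ) (hθ1 : θ ≤ 1)
    (δ κ : ℝ) (hδ : 0 ≤ δ) (hκ : 0 ≤ κ)
    (hmat : ((2 : ℝ) • !![1 - (1 - θ) * (1 + δ), (1 - θ) * (1 + δ);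
                (1 - θ) * (1 + δ), κ - (1 - θ) * (1 + δ)]
          - !![θ, 1 - θ; 1 - θ, 1 / θ - (1 - θ)]).PosSemidef)
    (B : EuclideanSpace ℝ (Fin q) →L[ℝ] EuclideanSpace ℝ (Fin p))
    (σ : ℝ) (hσ0 : 0 ≤ σ)
    (hσ : ∀ v : EuclideanSpace ℝ (Fin p),
      σ * ‖v‖ ^ 2 ≤ inner ℝ v ((B.comp (ContinuousLinearMap.adjoint B)) v))
    (lamp lam lamstar : EuclideanSpace ℝ (Fin p)) :
    σ / 2 * (‖lamp - lamstar‖ ^ 2 - (1 - θ) * ‖lam - lamstar‖ ^ 2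
        + 1 / θ * ‖lamp - lam‖ ^ 2)
      ≤ ‖ContinuousLinearMap.adjoint B (lamp - lamstar)‖ ^ 2
        - (1 - θ) * (1 + δ) * ‖ContinuousLinearMap.adjoint B (lam - lamstar)‖ ^ 2
        + κ * ‖ContinuousLinearMap.adjoint B (lamp - lam)‖ ^ 2 :=
  stmt_16_general θ hθ0 δ κ hmat B σ hσ0 hσ lamp lam lamstar
end
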